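/- Let O be a complete discrete valuation ring with uniformizer ϖ, let n ≥ 1, and let m ≥ 1 be an integer. For every M ∈ Mₙ(O) with M − Y ∈ ϖ^m·Mₙ(O), there exists g ∈ GLₙ(O) with g − 1 ∈ ϖ^m·Mₙ(O) such that g M g⁻¹ is a companion-type matrix all of whose bottom-row entries lie in ϖ^m·O. -/

import Mathlib

/-- The regular nilpotent matrix `Y` with `(i, i+1)`-entries equal to `1` and all
other entries `0`. -/
def Ymat (n : ℕ) (R : Type*) [CommRing R] : Matrix (Fin n) (Fin n) R :=
  fun i j => if (j : ℕ) = (i : ℕ) + 1 then 1 else 0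

/-! Let `K` be the Krylov matrix whose rows are `e₀ Mⁱ`. Cayley–Hamilton gives `K M = C K`
with `C` the companion matrix of `charpoly M`, so `K M K⁻¹ = C` once `K` is invertible.
Modulo `ϖ ^ m` the matrix `M` becomes `Y`, whose Krylov matrix is `1` and whose characteristic
polynomial is `Xⁿ`: hence `K ≡ 1` (so `K` is a unit, `ϖ ^ m` lying in the maximal ideal) and
the non-leading coefficients of `charpoly M`, i.e. the bottom row of `C`, are divisible by
`ϖ ^ m`. -/

open Matrix Polynomial

section Ymat

variable {n : ℕ} {R : Type*} [CommRing R]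

theorem Ymat_pow_apply (k : ℕ) (i j : Fin n) :
    (Ymat n R ^ k) i j = if (j : ℕ) = i + k then 1 else 0 := by
  induction k generalizing i with
  | zero => simp [one_apply, Fin.ext_iff, eq_comm]
  | succ k ih =>
    rw [pow_succ', mul_apply]
    by_cases hi : (i : ℕ) + 1 < n
    · rw [Finset.sum_eq_single ⟨i + 1, hi⟩]
      · simp [Ymat, ih, add_assoc, add_comm 1 k]
      · intro l _ hl
        simp [Ymat, Fin.ext_iff.not.mp hl]
      · simp
    · have hj : (j : ℕ) ≠ i + (k + 1) := by omega
      refine (Finset.sum_eq_zero fun l _ => ?_).trans (if_neg hj).symm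
      have hl : (l : ℕ) ≠ i + 1 := by omega
      simp [Ymat, hl]

theorem Ymat_charpoly : (Ymat n R).charpoly = X ^ n := by
  have hY : (Ymat n R).IsUpperTriangular := fun i j (hji : j < i) => if_neg (by omega)
  simp [charpoly_of_isUpperTriangular _ hY, Ymat]

theorem Ymat_map {S : Type*} [CommRing S] (f : R →+* S) : (Ymat n R).map f = Ymat n S := by
  ext i j
  simp [Ymat, apply_ite f]

end Ymat

theorem Polynomial.Monic.pow_natDegree_eq_neg_sum_of_aeval_eq_zero {R A : Type*} [CommRing R]
    [Ring A] [Algebra R A] {p : R[X]} (hp : p.Monic) {x : A} (hx : aeval x p = 0) :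
    x ^ p.natDegree = -∑ i ∈ Finset.range p.natDegree, p.coeff i • x ^ i := by
  rw [hp.as_sum] at hx
  simpa [Algebra.smul_def, eq_neg_iff_add_eq_zero] using hx

namespace Matrix

variable {n : ℕ} {R : Type*} [CommRing R]

def krylov (M : Matrix (Fin n) (Fin n) R) (v : Fin n → R) : Matrix (Fin n) (Fin n) R :=
  of fun i => v ᵥ* M ^ (i : ℕ)

def companion (n : ℕ) (p : R[X]) : Matrix (Fin n) (Fin n) R :=
  of fun i j => if (i : ℕ) + 1 = n then -p.coeff j else if (j : ℕ) = i + 1 then 1 else 0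

theorem krylov_mul_eq_companion_charpoly_mul (M : Matrix (Fin n) (Fin n) R) (v : Fin n → R) :
    krylov M v * M = companion n M.charpoly * krylov M v := by
  obtain _ | _ := subsingleton_or_nontrivial R
  · exact Subsingleton.elim _ _
  ext i j
  have hrow : (krylov M v * M) i = v ᵥ* M ^ ((i : ℕ) + 1) := by
    rw [pow_succ, ← vecMul_vecMul]; rfl
  rw [hrow, mul_apply]
  by_cases hi : (i : ℕ) + 1 = n
  · have hCH := M.charpoly_monic.pow_natDegree_eq_neg_sum_of_aeval_eq_zero M.aeval_self_charpoly
    rw [charpoly_natDegree_eq_dim, Fintype.card_fin] at hCH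
    rw [hi, hCH, ← Fin.sum_univ_eq_sum_range (fun k => M.charpoly.coeff k • M ^ k)]
    simp [companion, krylov, hi, vecMul_neg, vecMul_sum, vecMul_smul, Finset.sum_apply]
  · have hi' : (i : ℕ) + 1 < n := by omega
    rw [Finset.sum_eq_single ⟨i + 1, hi'⟩]
    · simp [companion, krylov, hi]
    · intro l _ hl
      simp [companion, hi, Fin.ext_iff.not.mp hl]
    · simp

theorem krylov_map {S : Type*} [CommRing S] (f : R →+* S) (M : Matrix (Fin n) (Fin n) R)
    (v : Fin n → R) : (krylov M v).map f = krylov (M.map f) (f ∘ v) := by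
  ext i j
  simp [krylov, RingHom.map_vecMul, ← RingHom.mapMatrix_apply]

-- `e₀` is written out rather than as `Pi.single 0 1`, which would require `n ≠ 0`.
theorem krylov_Ymat : krylov (Ymat n R) (fun j => if (j : ℕ) = 0 then 1 else 0) = 1 := by
  ext i j
  simp only [krylov, of_apply, vecMul, dotProduct, Ymat_pow_apply, ite_mul, one_mul, zero_mul]
  rw [Finset.sum_eq_single ⟨0, i.pos⟩ (fun l _ hl => if_neg (Fin.ext_iff.not.mp hl)) (by simp)]
  simp [one_apply, Fin.ext_iff, eq_comm]

theorem isUnit_of_map_eq_one {ι S : Type*} [Fintype ι] [DecidableEq ι] [CommRing S]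
    (f : R →+* S) [IsLocalHom f] {A : Matrix ι ι R} (hA : A.map f = 1) : IsUnit A := by
  rw [isUnit_iff_isUnit_det, ← isUnit_map_iff f, RingHom.map_det, RingHom.mapMatrix_apply, hA,
    det_one]
  exact isUnit_one

theorem map_mk_span_singleton_eq_iff {ι : Type*} {a : R} {A B : Matrix ι ι R} :
    A.map (Ideal.Quotient.mk (Ideal.span {a})) = B.map (Ideal.Quotient.mk (Ideal.span {a})) ↔
      ∀ i j, a ∣ (A - B) i j := by
  simp only [← ext_iff, map_apply, sub_apply, ← Ideal.Quotient.eq_zero_iff_dvd, map_sub,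
    sub_eq_zero]

end Matrix

theorem stmt6_general {O : Type*} [CommRing O] [IsDomain O] [IsDiscreteValuationRing O]
    (ϖ : O) (hϖ : Irreducible ϖ)
    (n : ℕ) (m : ℕ) (hm : 1 ≤ m)
    (M : Matrix (Fin n) (Fin n) O)
    (hM : ∀ i j : Fin n, ϖ ^ m ∣ (M - Ymat n O) i j) :
    ∃ g : GL (Fin n) O,
      (∀ i j : Fin n, ϖ ^ m ∣ ((g : Matrix (Fin n) (Fin n) O) - 1) i j) ∧
      (∀ i j : Fin n,
        let C := (g : Matrix (Fin n) (Fin n) O) * M *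
          ((g⁻¹ : GL (Fin n) O) : Matrix (Fin n) (Fin n) O)
        ((i : ℕ) + 1 < n → C i j = if (j : ℕ) = (i : ℕ) + 1 then 1 else 0) ∧
        ((i : ℕ) + 1 = n → ϖ ^ m ∣ C i j)) := by
  set I := Ideal.span {ϖ ^ m}
  set f := Ideal.Quotient.mk I
  have hMf : M.map f = Ymat n (O ⧸ I) := by
    rw [← Ymat_map f]
    exact map_mk_span_singleton_eq_iff.mpr hM
  set K := krylov M fun j => if (j : ℕ) = 0 then 1 else 0
  have hKf : K.map f = 1 := by
    rw [krylov_map, hMf, ← krylov_Ymat]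
    congr; ext j; simp [apply_ite f]
  have hI : I ≠ ⊤ := by
    rw [Ne, Ideal.span_singleton_eq_top, isUnit_pow_iff (by omega)]
    exact hϖ.not_isUnit
  have := isLocalHom_of_le_jacobson_bot I
    ((IsLocalRing.le_maximalIdeal hI).trans (IsLocalRing.maximalIdeal_le_jacobson ⊥))
  have hK := isUnit_of_map_eq_one f hKf
  have hconj : (hK.unit : Matrix (Fin n) (Fin n) O) * M *
      ((hK.unit⁻¹ : GL (Fin n) O) : Matrix (Fin n) (Fin n) O) = companion n M.charpoly :=
    (Units.mul_inv_eq_iff_eq_mul _).mpr (krylov_mul_eq_companion_charpoly_mul M _)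
  have hcoeff : ∀ k < n, ϖ ^ m ∣ M.charpoly.coeff k := fun k hk => by
    rw [← Ideal.Quotient.eq_zero_iff_dvd, ← coeff_map, ← charpoly_map, hMf, Ymat_charpoly,
      coeff_X_pow, if_neg hk.ne]
  have hK1 : (hK.unit : Matrix (Fin n) (Fin n) O).map f = (1 : Matrix (Fin n) (Fin n) O).map f := by
    rw [hK.unit_spec, hKf, Matrix.map_one _ (map_zero f) (map_one f)]
  refine ⟨hK.unit, map_mk_span_singleton_eq_iff.mp hK1, fun i j => ?_⟩
  simp only [hconj, companion]
  exact ⟨fun hi => if_neg hi.ne, fun hi => by simpa [hi] using hcoeff j j.isLt⟩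

/-- Let `O` be a complete discrete valuation ring with uniformizer
`ϖ`, let `n ≥ 1` and `m ≥ 1`. For every `M ∈ Mₙ(O)` with `M - Y ∈ ϖ^m·Mₙ(O)` there
exists `g ∈ GLₙ(O)` with `g - 1 ∈ ϖ^m·Mₙ(O)` such that `g M g⁻¹` is a companion-type
matrix whose bottom-row entries all lie in `ϖ^m·O`. -/
theorem stmt6 {O : Type*} [CommRing O] [IsDomain O] [IsDiscreteValuationRing O]
    [IsAdicComplete (IsLocalRing.maximalIdeal O) O]
    (ϖ : O) (hϖ : Irreducible ϖ)
    (n : ℕ) (hn : 1 ≤ n) (m : ℕ) (hm : 1 ≤ m)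
    (M : Matrix (Fin n) (Fin n) O)
    (hM : ∀ i j : Fin n, ϖ ^ m ∣ (M - Ymat n O) i j) :
    ∃ g : GL (Fin n) O,
      (∀ i j : Fin n, ϖ ^ m ∣ ((g : Matrix (Fin n) (Fin n) O) - 1) i j) ∧
      (∀ i j : Fin n,
        let C := (g : Matrix (Fin n) (Fin n) O) * M *
          ((g⁻¹ : GL (Fin n) O) : Matrix (Fin n) (Fin n) O)
        ((i : ℕ) + 1 < n → C i j = if (j : ℕ) = (i : ℕ) + 1 then 1 else 0) ∧
        ((i : ℕ) + 1 = n → ϖ ^ m ∣ C i j)) :=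
  stmt6_general ϖ hϖ n m hm M hM
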